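/- Let G be a finite group and g,h ∈ G, and suppose p, s ∈ ℤG have nonnegative coefficients and satisfy p + s = p·h + g·s. If w₀ ∈ G is a summand of p + s (i.e., has positive coefficient in p+s), then either w₀·h or g·w₀ is again a summand of p + s. -/

import Mathlib

/-!
Comparing coefficients in `p + s = p h + g s` gives `(p + s)(x) = p(x h⁻¹) + s(g⁻¹ x)`.
With nonnegative coefficients, `(p + s)(w h) ≥ p(w)` and `(p + s)(g w) ≥ s(w)`, and a positive
`(p + s)(w₀)` forces `p(w₀) > 0` or `s(w₀) > 0`.
-/

namespace MonoidAlgebra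

variable {R G : Type*} [Semiring R] [Group G]

theorem coeff_mul_of_add_of_mul (p s : R[G]) (g h x : G) :
    (p * of R G h + of R G g * s).coeff x = p.coeff (x * h⁻¹) + s.coeff (g⁻¹ * x) := by
  simp [of_apply, coeff_add]

variable [PartialOrder R] {p s : R[G]} {g h : G}

theorem coeff_le_coeff_add_mul_right_of_eq [AddLeftMono R]
    (heq : p + s = p * of R G h + of R G g * s)
    (hs : ∀ w, 0 ≤ s.coeff w) (w : G) : p.coeff w ≤ (p + s).coeff (w * h) := by
  rw [heq, coeff_mul_of_add_of_mul, mul_inv_cancel_right]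
  exact le_add_of_nonneg_right (hs _)

theorem coeff_le_coeff_add_mul_left_of_eq [AddRightMono R]
    (heq : p + s = p * of R G h + of R G g * s)
    (hp : ∀ w, 0 ≤ p.coeff w) (w : G) : s.coeff w ≤ (p + s).coeff (g * w) := by
  rw [heq, coeff_mul_of_add_of_mul, inv_mul_cancel_left]
  exact le_add_of_nonneg_left (hp _)

end MonoidAlgebra

open MonoidAlgebra in
theorem summand_propagates_general
    {G : Type*} [Group G] (g h : G)
    (p s : MonoidAlgebra ℤ G)
    (hp : ∀ w : G, 0 ≤ p.coeff w) (hs : ∀ w : G, 0 ≤ s.coeff w)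
    (heq : p + s = p * MonoidAlgebra.of ℤ G h + MonoidAlgebra.of ℤ G g * s)
    (w₀ : G) (hw₀ : 0 < (p + s).coeff w₀) :
    0 < (p + s).coeff (w₀ * h) ∨ 0 < (p + s).coeff (g * w₀) := by
  rw [coeff_add, Finsupp.add_apply] at hw₀
  rcases lt_or_ge 0 (p.coeff w₀) with hpw | hpw
  · exact .inl (hpw.trans_le (coeff_le_coeff_add_mul_right_of_eq heq hs w₀))
  · have hsw : 0 < s.coeff w₀ := by linarith
    exact .inr (hsw.trans_le (coeff_le_coeff_add_mul_left_of_eq heq hp w₀))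

/-- If p, s ∈ ℤG have nonnegative coefficients and p + s = p·h + g·s,
then for any summand w₀ of p + s (positive coefficient), either w₀·h or g·w₀ is again
a summand of p + s. -/
theorem summand_propagates
    {G : Type*} [Group G] [Fintype G] (g h : G)
    (p s : MonoidAlgebra ℤ G)
    (hp : ∀ w : G, 0 ≤ p.coeff w) (hs : ∀ w : G, 0 ≤ s.coeff w)
    (heq : p + s = p * MonoidAlgebra.of ℤ G h + MonoidAlgebra.of ℤ G g * s)
    (w₀ : G) (hw₀ : 0 < (p + s).coeff w₀) :
    0 < (p + s).coeff (w₀ * h) ∨ 0 < (p + s).coeff (g * w₀) :=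
  summand_propagates_general g h p s hp hs heq w₀ hw₀
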